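/- arXiv:2202.12876 — 2 statements merged into one kernel-verified Lean document; each statement's English description precedes it below -/
import Mathlib

section
/- Claim 4.2 in the case of trivial Weyl group (ρ = 0): Suppose χ ∈ M_ℝ satisfies ⟨λ', χ − θ⟩ ≤ 0, r_χ ≥ 1/2, and −η_0/2 ≤ ⟨λ_0, χ − θ⟩ ≤ Q. Let S ⊆ {1, …, n} be nonempty with ⟨λ', β_i⟩ < 0 for all i ∈ S, and set μ := χ − ∑_{i∈S} β_i. Then |⟨λ_0, μ − θ⟩| ≤ η_0/2, and r_μ ≤ r_χ, with strict inequality r_μ < r_χ whenever r_χ > 1/2. -/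
/-!
Write `a := ⟨λ', χ − θ⟩ ≤ 0` and `v := ∑_{i∈S} β_i`, so that `⟨λ', μ − θ⟩ = a − ⟨λ', v⟩`.
The shift `−⟨λ', v⟩` is positive and at most `D`, since `S` only collects indices with
`⟨λ', β_i⟩ < 0`, while `r_χ ≥ 1/2` says `D ≤ −2a`; a positive shift of `a` by at most `−2a`
does not increase `|a|`, and strictly decreases it when the shift is below `−2a`.
In the `λ_0`-direction the shift `−⟨λ_0, v⟩` lies between `0` and `−∑_{⟨λ', β_i⟩ < 0} ⟨λ_0, β_i⟩`,
which is exactly what moves the window `[−η_0/2, Q]` into `[−η_0/2, η_0/2]`.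
-/

noncomputable section

/-- The standard pairing between `N_ℝ = ℝ²` and `M_ℝ = ℝ²`. -/
def pairR (lam chi : Fin 2 → ℝ) : ℝ := ∑ k, lam k * chi k

/-- `D := −∑_{i : ⟨λ', β_i⟩ ≤ 0} ⟨λ', β_i⟩`. -/
def Dval {n : ℕ} (β : Fin n → Fin 2 → ℝ) (lam' : Fin 2 → ℝ) : ℝ :=
  -∑ i ∈ Finset.univ.filter (fun i => pairR lam' (β i) ≤ 0), pairR lam' (β i)

/-- `Q := η_0/2 + ∑_{i : ⟨λ', β_i⟩ < 0} ⟨λ_0, β_i⟩`, where `η_0 = −∑_i ⟨λ_0, β_i⟩`. -/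
def Qval {n : ℕ} (β : Fin n → Fin 2 → ℝ) (lam0 lam' : Fin 2 → ℝ) : ℝ :=
  (-∑ i, pairR lam0 (β i)) / 2 +
    ∑ i ∈ Finset.univ.filter (fun i => pairR lam' (β i) < 0), pairR lam0 (β i)

/-- r_nu := |pair(lam0-orthogonal lam', nu - theta)| / D. -/
def rval {n : ℕ} (β : Fin n → Fin 2 → ℝ) (lam' θ ν : Fin 2 → ℝ) : ℝ :=
  |pairR lam' (ν - θ)| / Dval β lam'

open Finset

section Pairing

lemma pairR_eq_dotProduct (l v : Fin 2 → ℝ) : pairR l v = l ⬝ᵥ v := rfl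

lemma pairR_sub (l v w : Fin 2 → ℝ) : pairR l (v - w) = pairR l v - pairR l w := by
  simp only [pairR_eq_dotProduct, dotProduct_sub]

lemma pairR_sum {n : ℕ} (l : Fin 2 → ℝ) (S : Finset (Fin n)) (β : Fin n → Fin 2 → ℝ) :
    pairR l (∑ i ∈ S, β i) = ∑ i ∈ S, pairR l (β i) := by
  simp only [pairR_eq_dotProduct, dotProduct_sum]

lemma pairR_sub_sub_right (l ν v θ : Fin 2 → ℝ) :
    pairR l (ν - v - θ) = pairR l (ν - θ) - pairR l v := by
  rw [sub_right_comm, pairR_sub]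

end Pairing

section Window

variable {n : ℕ} {β : Fin n → Fin 2 → ℝ} {lam0 lam' θ ν v : Fin 2 → ℝ}

lemma neg_sum_le_Dval {S : Finset (Fin n)} (hS : ∀ i ∈ S, pairR lam' (β i) ≤ 0) :
    -∑ i ∈ S, pairR lam' (β i) ≤ Dval β lam' := by
  refine neg_le_neg (sum_le_sum_of_subset_of_nonpos' (fun i hi => ?_) fun i hi _ => ?_)
  · simpa using hS i hi
  · simpa using hi

lemma Dval_pos_of_half_le_rval (hr : 1 / 2 ≤ rval β lam' θ ν) : 0 < Dval β lam' := by
  by_contra! hD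
  have : rval β lam' θ ν ≤ 0 := div_nonpos_of_nonneg_of_nonpos (abs_nonneg _) hD
  linarith

lemma rval_sub (ν v : Fin 2 → ℝ) :
    rval β lam' θ (ν - v) = |pairR lam' (ν - θ) - pairR lam' v| / Dval β lam' := by
  rw [rval, pairR_sub_sub_right]

lemma rval_sub_le_rval (hν : pairR lam' (ν - θ) ≤ 0) (hr : 1 / 2 ≤ rval β lam' θ ν)
    (hv : pairR lam' v ≤ 0) (hvD : -pairR lam' v ≤ Dval β lam') :
    rval β lam' θ (ν - v) ≤ rval β lam' θ ν := by
  have hD := Dval_pos_of_half_le_rval hr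
  rw [rval, abs_of_nonpos hν, le_div_iff₀ hD] at hr
  rw [rval_sub, rval, abs_of_nonpos hν]
  gcongr
  rw [abs_le]
  constructor <;> linarith

lemma rval_sub_lt_rval (hν : pairR lam' (ν - θ) ≤ 0) (hr : 1 / 2 < rval β lam' θ ν)
    (hv : pairR lam' v < 0) (hvD : -pairR lam' v ≤ Dval β lam') :
    rval β lam' θ (ν - v) < rval β lam' θ ν := by
  have hD := Dval_pos_of_half_le_rval hr.le
  rw [rval, abs_of_nonpos hν, lt_div_iff₀ hD] at hr
  rw [rval_sub, rval, abs_of_nonpos hν]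
  gcongr
  rw [abs_lt]
  constructor <;> linarith

lemma abs_pairR_sub_sum_le {S : Finset (Fin n)} (hlam0 : ∀ i, pairR lam0 (β i) ≤ 0)
    (hS : ∀ i ∈ S, pairR lam' (β i) < 0)
    (hlo : -((-∑ i, pairR lam0 (β i)) / 2) ≤ pairR lam0 (ν - θ))
    (hhi : pairR lam0 (ν - θ) ≤ Qval β lam0 lam') :
    |pairR lam0 (ν - ∑ i ∈ S, β i - θ)| ≤ (-∑ i, pairR lam0 (β i)) / 2 := by
  have hsum_nonpos : ∑ i ∈ S, pairR lam0 (β i) ≤ 0 := sum_nonpos fun i _ => hlam0 i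
  have hsum_ge : ∑ i ∈ univ.filter (fun i => pairR lam' (β i) < 0), pairR lam0 (β i) ≤
      ∑ i ∈ S, pairR lam0 (β i) :=
    sum_le_sum_of_subset_of_nonpos' (fun i hi => by simpa using hS i hi) fun i _ _ => hlam0 i
  rw [Qval] at hhi
  rw [pairR_sub_sub_right, pairR_sum, abs_le]
  constructor <;> linarith

end Window

theorem claim_4_2_trivial_weyl_general {n : ℕ}
    (β : Fin n → Fin 2 → ℝ)
    (lam0 : Fin 2 → ℝ) (hlam0 : ∀ i, pairR lam0 (β i) < 0)
    (lam' : Fin 2 → ℝ)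
    (θ : Fin 2 → ℝ)
    (χ : Fin 2 → ℝ)
    (hχ1 : pairR lam' (χ - θ) ≤ 0)
    (hχ2 : 1 / 2 ≤ rval β lam' θ χ)
    (hχ3 : -((-∑ i, pairR lam0 (β i)) / 2) ≤ pairR lam0 (χ - θ))
    (hχ4 : pairR lam0 (χ - θ) ≤ Qval β lam0 lam')
    (S : Finset (Fin n)) (hS : S.Nonempty)
    (hSneg : ∀ i ∈ S, pairR lam' (β i) < 0)
    (μ : Fin 2 → ℝ) (hμ : μ = χ - ∑ i ∈ S, β i) :
    |pairR lam0 (μ - θ)| ≤ (-∑ i, pairR lam0 (β i)) / 2 ∧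
      rval β lam' θ μ ≤ rval β lam' θ χ ∧
      (1 / 2 < rval β lam' θ χ → rval β lam' θ μ < rval β lam' θ χ) := by
  subst hμ
  have hv : pairR lam' (∑ i ∈ S, β i) < 0 := by
    rw [pairR_sum]
    exact sum_neg hSneg hS
  have hvD : -pairR lam' (∑ i ∈ S, β i) ≤ Dval β lam' := by
    rw [pairR_sum]
    exact neg_sum_le_Dval fun i hi => (hSneg i hi).le
  exact ⟨abs_pairR_sub_sum_le (fun i => (hlam0 i).le) hSneg hχ3 hχ4,
    rval_sub_le_rval hχ1 hχ2 hv.le hvD, fun hr => rval_sub_lt_rval hχ1 hr hv hvD⟩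

/-- Claim 4.2 with trivial Weyl group. -/
theorem claim_4_2_trivial_weyl {n : ℕ} (hn : 1 ≤ n)
    (β : Fin n → Fin 2 → ℝ)
    (hβint : ∀ i, ∃ b : Fin 2 → ℤ, β i = fun k => ((b k : ℝ)))
    (hspan : Submodule.span ℝ (Set.range β) = ⊤)
    (lam0 : Fin 2 → ℝ) (hlam0 : ∀ i, pairR lam0 (β i) < 0)
    (lam' : Fin 2 → ℝ) (hlam'ne : lam' ≠ 0)
    (hlam'ω : pairR lam' (∑ i, β i) = 0)
    (θ : Fin 2 → ℝ)
    (χ : Fin 2 → ℝ)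
    (hχ1 : pairR lam' (χ - θ) ≤ 0)
    (hχ2 : 1 / 2 ≤ rval β lam' θ χ)
    (hχ3 : -((-∑ i, pairR lam0 (β i)) / 2) ≤ pairR lam0 (χ - θ))
    (hχ4 : pairR lam0 (χ - θ) ≤ Qval β lam0 lam')
    (S : Finset (Fin n)) (hS : S.Nonempty)
    (hSneg : ∀ i ∈ S, pairR lam' (β i) < 0)
    (μ : Fin 2 → ℝ) (hμ : μ = χ - ∑ i ∈ S, β i) :
    |pairR lam0 (μ - θ)| ≤ (-∑ i, pairR lam0 (β i)) / 2 ∧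
      rval β lam' θ μ ≤ rval β lam' θ χ ∧
      (1 / 2 < rval β lam' θ χ → rval β lam' θ μ < rval β lam' θ χ) :=
  claim_4_2_trivial_weyl_general β lam0 hlam0 lam' θ χ hχ1 hχ2 hχ3 hχ4 S hS hSneg μ hμ
end
end

section
/- Claim 4.2 in the case of a nontrivial Weyl reflection: Suppose χ ∈ M satisfies ⟨λ', χ − θ⟩ ≤ 0, r_χ ≥ 1/2, and −η_0/2 ≤ ⟨λ_0, χ − θ⟩ ≤ Q. Let S ⊆ {1, …, n} be nonempty with ⟨λ', β_i⟩ < 0 for all i ∈ S, and set μ := χ − ∑_{i∈S} β_i. If ⟨λ', μ + ρ⟩ ≠ 0, so that μ⁺ is defined, then |⟨λ_0, μ⁺ − θ⟩| ≤ η_0/2 and r_{μ⁺} ≤ r_χ, with strict inequality r_{μ⁺} < r_χ whenever r_χ > 1/2. -/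
/-!
Since `⟨λ', θ⟩ = 0`, write `A := ⟨λ', χ − θ⟩ ≤ 0` and `s := ∑_{i∈S} ⟨λ', β_i⟩`, so that
`⟨λ', μ + ρ⟩ = A − s − 1` is a nonzero integer. The reflection fixes `⟨λ₀, ·⟩` and replaces
`⟨λ', μ + ρ⟩` by `−|⟨λ', μ + ρ⟩|`; hence `⟨λ₀, μ⁺ − θ⟩ = ⟨λ₀, χ − θ⟩ − ∑_{i∈S} ⟨λ₀, β_i⟩`, which
the bounds on `⟨λ₀, χ − θ⟩` keep inside `[−η₀/2, η₀/2]`, and `r_{μ⁺} = |A − s − 1| / D` while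
`r_χ = (1 − A) / D`. Finally `0 < −s ≤ D ≤ 2(1 − A)`, the last inequality being `r_χ ≥ 1/2`,
gives `|A − s − 1| ≤ 1 − A`, strictly when `D < 2(1 − A)`.
-/

noncomputable section

/-- The shifted window width: `r_nu := (|pair lam' (nu - theta)| - pair lam' rho) / D`. -/
def rvalRho {n : ℕ} (β : Fin n → Fin 2 → ℝ) (lam' ρ θ ν : Fin 2 → ℝ) : ℝ :=
  (|pairR lam' (ν - θ)| - pairR lam' ρ) / Dval β lam'

/-- The dominant representative `μ⁺` for the ρ-shifted action of the Weyl group `{1, w₀}`: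
`μ⁺ = μ` if `pair lam' (μ + ρ) < 0`, and `μ⁺ = w₀(μ + ρ) − ρ` if `pair lam' (μ + ρ) > 0`. -/
def muPlus (lam' ρ : Fin 2 → ℝ) (w0 : (Fin 2 → ℝ) →ₗ[ℝ] (Fin 2 → ℝ))
    (μ : Fin 2 → ℝ) : Fin 2 → ℝ :=
  if pairR lam' (μ + ρ) < 0 then μ else w0 (μ + ρ) - ρ

open Finset

section Pairing

variable (lam : Fin 2 → ℝ)

theorem pairR_add (x y : Fin 2 → ℝ) : pairR lam (x + y) = pairR lam x + pairR lam y :=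
  dotProduct_add lam x y

theorem pairR_sub_s14 (x y : Fin 2 → ℝ) : pairR lam (x - y) = pairR lam x - pairR lam y :=
  dotProduct_sub lam x y

theorem pairR_smul (c : ℝ) (x : Fin 2 → ℝ) : pairR lam (c • x) = c * pairR lam x :=
  dotProduct_smul c lam x

theorem pairR_sum_s14 {ι : Type*} (s : Finset ι) (v : ι → Fin 2 → ℝ) :
    pairR lam (∑ i ∈ s, v i) = ∑ i ∈ s, pairR lam (v i) :=
  dotProduct_sum lam s v

end Pairing

section Window

variable {n : ℕ} (β : Fin n → Fin 2 → ℝ) {lam0 lam' : Fin 2 → ℝ} {S : Finset (Fin n)}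

theorem neg_Dval_le_sum (hS : ∀ i ∈ S, pairR lam' (β i) ≤ 0) :
    -Dval β lam' ≤ ∑ i ∈ S, pairR lam' (β i) := by
  rw [Dval, neg_neg]
  exact sum_le_sum_of_subset_of_nonpos' (fun i hi => mem_filter.mpr ⟨mem_univ i, hS i hi⟩)
    fun i hi _ => (mem_filter.mp hi).2

theorem Qval_le_half_add_sum (hlam0 : ∀ i, pairR lam0 (β i) ≤ 0)
    (hS : ∀ i ∈ S, pairR lam' (β i) < 0) :
    Qval β lam0 lam' ≤ (-∑ i, pairR lam0 (β i)) / 2 + ∑ i ∈ S, pairR lam0 (β i) := by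
  unfold Qval
  gcongr _ + ?_
  exact sum_le_sum_of_subset_of_nonpos' (fun i hi => mem_filter.mpr ⟨mem_univ i, hS i hi⟩)
    fun i _ _ => hlam0 i

variable {β} {ρ θ : Fin 2 → ℝ}

theorem rvalRho_of_pairR_nonpos {ν : Fin 2 → ℝ} (h : pairR lam' (ν - θ) ≤ 0) :
    rvalRho β lam' ρ θ ν = (-pairR lam' (ν - θ) - pairR lam' ρ) / Dval β lam' := by
  rw [rvalRho, abs_of_nonpos h]

end Window

section WeylReflection

variable {lam0 lam' ρ : Fin 2 → ℝ} {w0 : (Fin 2 → ℝ) →ₗ[ℝ] (Fin 2 → ℝ)}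

theorem pairR_muPlus_of_invariant (hw0 : ∀ ν, pairR lam0 (w0 ν) = pairR lam0 ν)
    (hρ0 : pairR lam0 ρ = 0) (μ : Fin 2 → ℝ) :
    pairR lam0 (muPlus lam' ρ w0 μ) = pairR lam0 μ := by
  unfold muPlus
  split_ifs
  · rfl
  · rw [pairR_sub_s14, hw0, pairR_add, hρ0, add_zero, sub_zero]

theorem pairR_muPlus_add (hw0 : ∀ ν, pairR lam' (w0 ν) = -pairR lam' ν) (μ : Fin 2 → ℝ) :
    pairR lam' (muPlus lam' ρ w0 μ + ρ) = -|pairR lam' (μ + ρ)| := by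
  unfold muPlus
  split_ifs with h
  · rw [abs_of_neg h, neg_neg]
  · rw [sub_add_cancel, hw0, abs_of_nonneg (not_lt.mp h)]

theorem rvalRho_muPlus {n : ℕ} (β : Fin n → Fin 2 → ℝ) {θ μ : Fin 2 → ℝ}
    (hw0 : ∀ ν, pairR lam' (w0 ν) = -pairR lam' ν) (hρ : pairR lam' ρ = -1)
    (hθ : pairR lam' θ = 0) (hμ : 1 ≤ |pairR lam' (μ + ρ)|) :
    rvalRho β lam' ρ θ (muPlus lam' ρ w0 μ) = |pairR lam' (μ + ρ)| / Dval β lam' := by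
  have h : pairR lam' (muPlus lam' ρ w0 μ - θ) = 1 - |pairR lam' (μ + ρ)| := by
    rw [pairR_sub_s14, hθ, ← add_sub_cancel_right (muPlus lam' ρ w0 μ) ρ, pairR_sub_s14,
      pairR_muPlus_add hw0, hρ]
    ring
  rw [rvalRho_of_pairR_nonpos (by linarith), h, hρ]
  ring

end WeylReflection

theorem abs_pairR_muPlus_sub_le {n : ℕ} (β : Fin n → Fin 2 → ℝ) {lam0 lam' ρ θ χ μ : Fin 2 → ℝ}
    {w0 : (Fin 2 → ℝ) →ₗ[ℝ] (Fin 2 → ℝ)} {S : Finset (Fin n)}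
    (hlam0 : ∀ i, pairR lam0 (β i) ≤ 0) (hw0 : ∀ ν, pairR lam0 (w0 ν) = pairR lam0 ν)
    (hρ0 : pairR lam0 ρ = 0)
    (hχ3 : -((-∑ i, pairR lam0 (β i)) / 2) ≤ pairR lam0 (χ - θ))
    (hχ4 : pairR lam0 (χ - θ) ≤ Qval β lam0 lam')
    (hSneg : ∀ i ∈ S, pairR lam' (β i) < 0) (hμ : μ = χ - ∑ i ∈ S, β i) :
    |pairR lam0 (muPlus lam' ρ w0 μ - θ)| ≤ (-∑ i, pairR lam0 (β i)) / 2 := by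
  have ht : ∑ i ∈ S, pairR lam0 (β i) ≤ 0 := sum_nonpos fun i _ => hlam0 i
  have hQ := Qval_le_half_add_sum β hlam0 hSneg
  rw [pairR_sub_s14, pairR_muPlus_of_invariant hw0 hρ0, ← pairR_sub_s14, hμ, sub_right_comm, pairR_sub_s14,
    pairR_sum_s14]
  exact abs_le.mpr ⟨by linarith, by linarith⟩

theorem rvalRho_muPlus_le {n : ℕ} (β : Fin n → Fin 2 → ℝ) {lam' ρ θ χ μ : Fin 2 → ℝ}
    {w0 : (Fin 2 → ℝ) →ₗ[ℝ] (Fin 2 → ℝ)} {S : Finset (Fin n)}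
    (hw0 : ∀ ν, pairR lam' (w0 ν) = -pairR lam' ν) (hρ : pairR lam' ρ = -1)
    (hθ : pairR lam' θ = 0) (hχ1 : pairR lam' (χ - θ) ≤ 0)
    (hχ2 : 1 / 2 ≤ rvalRho β lam' ρ θ χ)
    (hS : S.Nonempty) (hSneg : ∀ i ∈ S, pairR lam' (β i) < 0) (hμ : μ = χ - ∑ i ∈ S, β i)
    (hμρ : 1 ≤ |pairR lam' (μ + ρ)|) :
    rvalRho β lam' ρ θ (muPlus lam' ρ w0 μ) ≤ rvalRho β lam' ρ θ χ ∧
      (1 / 2 < rvalRho β lam' ρ θ χ →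
        rvalRho β lam' ρ θ (muPlus lam' ρ w0 μ) < rvalRho β lam' ρ θ χ) := by
  set A := pairR lam' χ
  set s := ∑ i ∈ S, pairR lam' (β i)
  set D := Dval β lam'
  have hA : A ≤ 0 := by rwa [pairR_sub_s14, hθ, sub_zero] at hχ1
  have hs : s < 0 := sum_neg hSneg hS
  have hDs : -D ≤ s := neg_Dval_le_sum β fun i hi => (hSneg i hi).le
  have hD : 0 < D := by linarith
  have hrχ : rvalRho β lam' ρ θ χ = (1 - A) / D := by
    rw [rvalRho_of_pairR_nonpos hχ1, pairR_sub_s14, hθ, hρ]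
    ring
  have hrμ : rvalRho β lam' ρ θ (muPlus lam' ρ w0 μ) = |A - s - 1| / D := by
    rw [rvalRho_muPlus β hw0 hρ hθ hμρ, hμ, pairR_add, pairR_sub_s14, pairR_sum_s14, hρ, ← sub_eq_add_neg]
  rw [hrχ, le_div_iff₀ hD] at hχ2
  rw [hrχ, hrμ]
  refine ⟨by gcongr; exact abs_le.mpr ⟨by linarith, by linarith⟩, fun h => ?_⟩
  rw [lt_div_iff₀ hD] at h
  gcongr
  exact abs_lt.mpr ⟨by linarith, by linarith⟩

theorem claim_4_2_weyl_general {n : ℕ}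
    (β : Fin n → Fin 2 → ℝ)
    (hβint : ∀ i, ∃ b : Fin 2 → ℤ, β i = fun k => ((b k : ℝ)))
    (lam0 : Fin 2 → ℝ) (hlam0 : ∀ i, pairR lam0 (β i) < 0)
    (lam' : Fin 2 → ℝ)
    (hlam'ω : pairR lam' (∑ i, β i) = 0)
    (hlam'int : ∀ c : Fin 2 → ℤ, ∃ z : ℤ, pairR lam' (fun k => ((c k : ℝ))) = (z : ℝ))
    (ρ : Fin 2 → ℝ)
    (hρ0 : pairR lam0 ρ = 0) (hρ' : pairR lam' ρ = -1)
    (w0 : (Fin 2 → ℝ) →ₗ[ℝ] (Fin 2 → ℝ))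
    (hw0lam0 : ∀ ν, pairR lam0 (w0 ν) = pairR lam0 ν)
    (hw0lam' : ∀ ν, pairR lam' (w0 ν) = -pairR lam' ν)
    (θ : Fin 2 → ℝ) (hθ : ∃ c : ℝ, θ = c • (∑ i, β i))
    (χ : Fin 2 → ℝ) (hχM : ∃ c : Fin 2 → ℤ, χ = fun k => ((c k : ℝ)))
    (hχ1 : pairR lam' (χ - θ) ≤ 0)
    (hχ2 : 1 / 2 ≤ rvalRho β lam' ρ θ χ)
    (hχ3 : -((-∑ i, pairR lam0 (β i)) / 2) ≤ pairR lam0 (χ - θ))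
    (hχ4 : pairR lam0 (χ - θ) ≤ Qval β lam0 lam')
    (S : Finset (Fin n)) (hS : S.Nonempty)
    (hSneg : ∀ i ∈ S, pairR lam' (β i) < 0)
    (μ : Fin 2 → ℝ) (hμ : μ = χ - ∑ i ∈ S, β i)
    (hμplus : pairR lam' (μ + ρ) ≠ 0) :
    |pairR lam0 (muPlus lam' ρ w0 μ - θ)| ≤ (-∑ i, pairR lam0 (β i)) / 2 ∧
      rvalRho β lam' ρ θ (muPlus lam' ρ w0 μ) ≤ rvalRho β lam' ρ θ χ ∧
      (1 / 2 < rvalRho β lam' ρ θ χ →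
        rvalRho β lam' ρ θ (muPlus lam' ρ w0 μ) < rvalRho β lam' ρ θ χ) := by
  have hθ' : pairR lam' θ = 0 := by
    obtain ⟨c, rfl⟩ := hθ
    rw [pairR_smul, hlam'ω, mul_zero]
  obtain ⟨z, hz⟩ : ∃ z : ℤ, pairR lam' μ = z := by
    choose b hb using hβint
    obtain ⟨c, rfl⟩ := hχM
    obtain ⟨z, hz⟩ := hlam'int (c - ∑ i ∈ S, b i)
    refine ⟨z, hz ▸ congrArg (pairR lam') ?_⟩
    funext k
    simp [hμ, hb]
  have hμρ : 1 ≤ |pairR lam' (μ + ρ)| := by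
    rw [pairR_add, hρ', hz] at hμplus ⊢
    exact_mod_cast Int.one_le_abs (z := z - 1) (by exact_mod_cast hμplus)
  exact ⟨abs_pairR_muPlus_sub_le β (fun i => (hlam0 i).le) hw0lam0 hρ0 hχ3 hχ4 hSneg hμ,
    rvalRho_muPlus_le β hw0lam' hρ' hθ' hχ1 hχ2 hS hSneg hμ hμρ⟩

/-- Claim 4.2 with a nontrivial Weyl reflection. -/
theorem claim_4_2_weyl {n : ℕ} (hn : 1 ≤ n)
    (β : Fin n → Fin 2 → ℝ)
    (hβint : ∀ i, ∃ b : Fin 2 → ℤ, β i = fun k => ((b k : ℝ)))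
    (hspan : Submodule.span ℝ (Set.range β) = ⊤)
    (lam0 : Fin 2 → ℝ) (hlam0 : ∀ i, pairR lam0 (β i) < 0)
    (lam' : Fin 2 → ℝ) (hlam'ne : lam' ≠ 0)
    (hlam'ω : pairR lam' (∑ i, β i) = 0)
    (hlam'int : ∀ c : Fin 2 → ℤ, ∃ z : ℤ, pairR lam' (fun k => ((c k : ℝ))) = (z : ℝ))
    (ρ : Fin 2 → ℝ)
    (h2ρ : ∃ r : Fin 2 → ℤ, (2 : ℝ) • ρ = fun k => ((r k : ℝ)))
    (hρ0 : pairR lam0 ρ = 0) (hρ' : pairR lam' ρ = -1)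
    (w0 : (Fin 2 → ℝ) →ₗ[ℝ] (Fin 2 → ℝ))
    (hw0invol : ∀ ν, w0 (w0 ν) = ν)
    (hw0lam0 : ∀ ν, pairR lam0 (w0 ν) = pairR lam0 ν)
    (hw0lam' : ∀ ν, pairR lam' (w0 ν) = -pairR lam' ν)
    (θ : Fin 2 → ℝ) (hθ : ∃ c : ℝ, θ = c • (∑ i, β i))
    (χ : Fin 2 → ℝ) (hχM : ∃ c : Fin 2 → ℤ, χ = fun k => ((c k : ℝ)))
    (hχ1 : pairR lam' (χ - θ) ≤ 0)
    (hχ2 : 1 / 2 ≤ rvalRho β lam' ρ θ χ)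
    (hχ3 : -((-∑ i, pairR lam0 (β i)) / 2) ≤ pairR lam0 (χ - θ))
    (hχ4 : pairR lam0 (χ - θ) ≤ Qval β lam0 lam')
    (S : Finset (Fin n)) (hS : S.Nonempty)
    (hSneg : ∀ i ∈ S, pairR lam' (β i) < 0)
    (μ : Fin 2 → ℝ) (hμ : μ = χ - ∑ i ∈ S, β i)
    (hμplus : pairR lam' (μ + ρ) ≠ 0) :
    |pairR lam0 (muPlus lam' ρ w0 μ - θ)| ≤ (-∑ i, pairR lam0 (β i)) / 2 ∧
      rvalRho β lam' ρ θ (muPlus lam' ρ w0 μ) ≤ rvalRho β lam' ρ θ χ ∧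
      (1 / 2 < rvalRho β lam' ρ θ χ →
        rvalRho β lam' ρ θ (muPlus lam' ρ w0 μ) < rvalRho β lam' ρ θ χ) :=
  claim_4_2_weyl_general β hβint lam0 hlam0 lam' hlam'ω hlam'int ρ hρ0 hρ' w0 hw0lam0 hw0lam' θ hθ χ
    hχM hχ1 hχ2 hχ3 hχ4 S hS hSneg μ hμ hμplus
end
end
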